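/- arXiv:2005.10623 — 2 statements merged into one kernel-verified Lean document; each statement's English description precedes it below -/
import Mathlib

section
/- If 𝐌 : I^p → I^p is a continuous, weakly contractive mean-type mapping, then there exists a unique 𝐌-invariant mean K : I^p → I; moreover, the sequence of iterates (𝐌ⁿ)_{n∈ℕ} converges pointwise on I^p to 𝐊 := (K,…,K). -/
open Filter Set Topology

/-- `M` is a mean on the interval `I` (for `p`-tuples): its value is between the
minimum and the maximum of the arguments, for every tuple with entries in `I`. -/
def IsMean (I : Set ℝ) (p : ℕ) (M : (Fin p → ℝ) → ℝ) : Prop :=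
  ∀ v : Fin p → ℝ, (∀ i, v i ∈ I) →
    sInf (Set.range v) ≤ M v ∧ M v ≤ sSup (Set.range v)

/-- A mean-type mapping: every coordinate function is a mean on `I`, and it maps
`I^p` into `I^p`. -/
def IsMeanType (I : Set ℝ) (p : ℕ) (T : (Fin p → ℝ) → Fin p → ℝ) : Prop :=
  (∀ i, IsMean I p fun v => T v i) ∧
    ∀ v : Fin p → ℝ, (∀ i, v i ∈ I) → ∀ i, T v i ∈ I

/-- The unfolded orbit `O*_𝐌(v)`: the `(n*p + i)`-th term (`0 ≤ i < p`) is the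
`i`-th coordinate of `𝐌ⁿ(v)`. -/
def orbitSeq (p : ℕ) (hp : 0 < p) (T : (Fin p → ℝ) → Fin p → ℝ)
    (v : Fin p → ℝ) : ℕ → ℝ :=
  fun k => (T^[k / p] v) ⟨k % p, Nat.mod_lt k hp⟩

/-!
The minimum and the maximum of `𝐌ⁿ(v)` are monotone resp. antitone in `n`, so the gap between
them decreases to some `D ≥ 0`. All iterates lie in the compact box `[min v, max v]^p ⊆ I^p`,
so some subsequence converges to a point `w` with gap `D`; if `D > 0`, weak contractivity makes
the gap of some `𝐌^{n₀}(w)` smaller than `D`, and by continuity so is the gap of nearby iterates,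
a contradiction. Hence min and max squeeze all coordinates to a common limit `K(v)`, which is
invariant because it does not see the first step of the orbit, and any invariant mean `K'`
satisfies `min 𝐌ⁿ(v) ≤ K'(v) ≤ max 𝐌ⁿ(v)` for every `n`, so `K' = K`.
-/

open Function

def IsWeaklyContractive (I : Set ℝ) (p : ℕ) (T : (Fin p → ℝ) → Fin p → ℝ) : Prop :=
  ∀ v : Fin p → ℝ, (∀ i, v i ∈ I) → (∃ i j, v i ≠ v j) →
    ∃ n₀ : ℕ, ∀ n ≥ n₀,
      sSup (range (T^[n] v)) - sInf (range (T^[n] v)) < sSup (range v) - sInf (range v)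

noncomputable def limitMean {p : ℕ} (T : (Fin p → ℝ) → Fin p → ℝ) (v : Fin p → ℝ) : ℝ :=
  ⨆ n, sInf (range (T^[n] v))

theorem IsCompact.tendsto_comp_iterate_nhds_zero {X : Type*} [TopologicalSpace X]
    [FirstCountableTopology X] {S : Set X} (hS : IsCompact S) {T : X → X} (hTS : MapsTo T S S)
    (hT : ContinuousOn T S) {f : X → ℝ} (hf : ContinuousOn f S) (hf0 : ∀ x ∈ S, 0 ≤ f x)
    (hfT : ∀ x ∈ S, f (T x) ≤ f x) (hcontr : ∀ x ∈ S, 0 < f x → ∃ n, f (T^[n] x) < f x)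
    {x : X} (hx : x ∈ S) : Tendsto (fun n => f (T^[n] x)) atTop (𝓝 0) := by
  have horbit : ∀ n, T^[n] x ∈ S := fun n => hTS.iterate n hx
  set d := fun n => f (T^[n] x)
  have hd_anti : Antitone d := antitone_nat_of_succ_le fun n => by
    simpa only [d, iterate_succ_apply'] using hfT _ (horbit n)
  have hd_bdd : BddBelow (range d) := ⟨0, forall_mem_range.2 fun n => hf0 _ (horbit n)⟩
  have hd_lim : Tendsto d atTop (𝓝 (⨅ n, d n)) := tendsto_atTop_ciInf hd_anti hd_bdd
  suffices hD : ⨅ n, d n = 0 by rwa [hD] at hd_lim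
  obtain ⟨w, hwS, φ, hφ, hφw⟩ := hS.tendsto_subseq horbit
  have hφwS : Tendsto (fun k => T^[φ k] x) atTop (𝓝[S] w) :=
    tendsto_nhdsWithin_iff.2 ⟨hφw, Eventually.of_forall fun k => horbit (φ k)⟩
  have hfw : f w = ⨅ n, d n :=
    tendsto_nhds_unique ((hf w hwS).tendsto.comp hφwS) (hd_lim.comp hφ.tendsto_atTop)
  by_contra hD
  obtain ⟨n, hn⟩ := hcontr w hwS (hfw ▸ (le_ciInf fun n => hf0 _ (horbit n)).lt_of_ne' hD)
  have hfTn : Tendsto (fun k => d (n + φ k)) atTop (𝓝 (f (T^[n] w))) := by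
    simpa only [d, comp_def, iterate_add_apply] using
      ((hf.comp (hT.iterate hTS n) (hTS.iterate n)) w hwS).tendsto.comp hφwS
  exact (hfw ▸ hn).not_ge (ge_of_tendsto' hfTn fun k => ciInf_le hd_bdd _)

section FiniteFamily

variable {ι : Type*} [Fintype ι]

theorem mem_Icc_sInf_sSup_range (w : ι → ℝ) :
    w ∈ Icc (fun _ => sInf (range w)) (fun _ => sSup (range w)) :=
  ⟨fun i => csInf_le (finite_range w).bddBelow (mem_range_self i),
    fun i => le_csSup (finite_range w).bddAbove (mem_range_self i)⟩

variable [Nonempty ι]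

theorem continuous_sSup_range : Continuous fun w : ι → ℝ => sSup (range w) := by
  refine (Continuous.finset_sup'_apply (f := fun i (w : ι → ℝ) => w i) Finset.univ_nonempty
    fun i _ => continuous_apply i).congr fun w => ?_
  exact Finset.sup'_univ_eq_ciSup w

theorem continuous_sInf_range : Continuous fun w : ι → ℝ => sInf (range w) := by
  refine (Continuous.finset_inf'_apply (f := fun i (w : ι → ℝ) => w i) Finset.univ_nonempty
    fun i _ => continuous_apply i).congr fun w => ?_
  exact Finset.inf'_univ_eq_ciInf w

theorem sInf_range_le_sSup_range (w : ι → ℝ) : sInf (range w) ≤ sSup (range w) :=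
  csInf_le_csSup (range_nonempty w) (finite_range w).bddBelow (finite_range w).bddAbove

theorem exists_ne_of_sInf_range_lt_sSup_range {w : ι → ℝ}
    (h : sInf (range w) < sSup (range w)) : ∃ i j, w i ≠ w j := by
  obtain ⟨i, hi⟩ : ∃ i, w i = sInf (range w) := exists_eq_ciInf_of_finite
  obtain ⟨j, hj⟩ : ∃ j, w j = sSup (range w) := exists_eq_ciSup_of_finite
  exact ⟨i, j, by rw [hi, hj]; exact h.ne⟩

theorem Set.OrdConnected.Icc_sInf_sSup_range_subset {I : Set ℝ} (hI : I.OrdConnected)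
    {w : ι → ℝ} (hw : ∀ i, w i ∈ I) :
    Icc (fun _ => sInf (range w)) (fun _ => sSup (range w)) ⊆ {u : ι → ℝ | ∀ i, u i ∈ I} := by
  obtain ⟨i, hi⟩ : ∃ i, w i = sInf (range w) := exists_eq_ciInf_of_finite
  obtain ⟨j, hj⟩ : ∃ j, w j = sSup (range w) := exists_eq_ciSup_of_finite
  have hinf : sInf (range w) ∈ I := hi ▸ hw i
  have hsup : sSup (range w) ∈ I := hj ▸ hw j
  exact fun u hu k => hI.out hinf hsup ⟨hu.1 k, hu.2 k⟩

end FiniteFamily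

namespace IsMeanType

variable {I : Set ℝ} {p : ℕ} {T : (Fin p → ℝ) → Fin p → ℝ}

theorem mapsTo (hT : IsMeanType I p T) :
    MapsTo T {v : Fin p → ℝ | ∀ i, v i ∈ I} {v : Fin p → ℝ | ∀ i, v i ∈ I} :=
  hT.2

variable [NeZero p]

theorem sInf_range_le_sInf_range_apply (hT : IsMeanType I p T) {v : Fin p → ℝ}
    (hv : ∀ i, v i ∈ I) : sInf (range v) ≤ sInf (range (T v)) :=
  le_csInf (range_nonempty _) (forall_mem_range.2 fun i => (hT.1 i v hv).1)

theorem sSup_range_apply_le_sSup_range (hT : IsMeanType I p T) {v : Fin p → ℝ}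
    (hv : ∀ i, v i ∈ I) : sSup (range (T v)) ≤ sSup (range v) :=
  csSup_le (range_nonempty _) (forall_mem_range.2 fun i => (hT.1 i v hv).2)

theorem monotone_sInf_range_iterate (hT : IsMeanType I p T) {v : Fin p → ℝ}
    (hv : ∀ i, v i ∈ I) : Monotone fun n => sInf (range (T^[n] v)) :=
  monotone_nat_of_le_succ fun n => by
    simpa only [iterate_succ_apply'] using
      hT.sInf_range_le_sInf_range_apply (hT.mapsTo.iterate n hv)

theorem antitone_sSup_range_iterate (hT : IsMeanType I p T) {v : Fin p → ℝ}
    (hv : ∀ i, v i ∈ I) : Antitone fun n => sSup (range (T^[n] v)) :=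
  antitone_nat_of_succ_le fun n => by
    simpa only [iterate_succ_apply'] using
      hT.sSup_range_apply_le_sSup_range (hT.mapsTo.iterate n hv)

theorem mapsTo_Icc (hT : IsMeanType I p T) {a b : ℝ}
    (hab : Icc (fun _ => a) (fun _ => b) ⊆ {v : Fin p → ℝ | ∀ i, v i ∈ I}) :
    MapsTo T (Icc (fun _ => a) (fun _ => b)) (Icc (fun _ => a) (fun _ => b)) := fun v hv => by
  have hvI := hab hv
  have ha : a ≤ sInf (range v) := le_csInf (range_nonempty v) (forall_mem_range.2 hv.1)
  have hb : sSup (range v) ≤ b := csSup_le (range_nonempty v) (forall_mem_range.2 hv.2)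
  exact ⟨fun i => ha.trans (hT.1 i v hvI).1, fun i => (hT.1 i v hvI).2.trans hb⟩

theorem tendsto_sSup_sub_sInf_range_iterate (hT : IsMeanType I p T) (hI : I.OrdConnected)
    (hcont : ContinuousOn T {v : Fin p → ℝ | ∀ i, v i ∈ I}) (hwc : IsWeaklyContractive I p T)
    {v : Fin p → ℝ} (hv : ∀ i, v i ∈ I) :
    Tendsto (fun n => sSup (range (T^[n] v)) - sInf (range (T^[n] v))) atTop (𝓝 0) := by
  have hbox := hI.Icc_sInf_sSup_range_subset hv
  refine isCompact_Icc.tendsto_comp_iterate_nhds_zero (hT.mapsTo_Icc hbox) (hcont.mono hbox)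
    (continuous_sSup_range.sub continuous_sInf_range).continuousOn
    (fun w _ => sub_nonneg.2 (sInf_range_le_sSup_range w))
    (fun w hw => sub_le_sub (hT.sSup_range_apply_le_sSup_range (hbox hw))
      (hT.sInf_range_le_sInf_range_apply (hbox hw)))
    (fun w hw hgap => ?_) (mem_Icc_sInf_sSup_range v)
  obtain ⟨n, hn⟩ := hwc w (hbox hw) (exists_ne_of_sInf_range_lt_sSup_range (sub_pos.1 hgap))
  exact ⟨n, hn n le_rfl⟩

theorem sInf_range_iterate_le_sSup_range (hT : IsMeanType I p T) {v : Fin p → ℝ}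
    (hv : ∀ i, v i ∈ I) (n : ℕ) : sInf (range (T^[n] v)) ≤ sSup (range v) :=
  (sInf_range_le_sSup_range _).trans (hT.antitone_sSup_range_iterate hv (Nat.zero_le n))

theorem tendsto_sInf_range_iterate_limitMean (hT : IsMeanType I p T) {v : Fin p → ℝ}
    (hv : ∀ i, v i ∈ I) :
    Tendsto (fun n => sInf (range (T^[n] v))) atTop (𝓝 (limitMean T v)) :=
  tendsto_atTop_ciSup (hT.monotone_sInf_range_iterate hv)
    ⟨sSup (range v), forall_mem_range.2 (hT.sInf_range_iterate_le_sSup_range hv)⟩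

theorem tendsto_sSup_range_iterate_limitMean (hT : IsMeanType I p T) (hI : I.OrdConnected)
    (hcont : ContinuousOn T {v : Fin p → ℝ | ∀ i, v i ∈ I}) (hwc : IsWeaklyContractive I p T)
    {v : Fin p → ℝ} (hv : ∀ i, v i ∈ I) :
    Tendsto (fun n => sSup (range (T^[n] v))) atTop (𝓝 (limitMean T v)) := by
  simpa using (hT.tendsto_sSup_sub_sInf_range_iterate hI hcont hwc hv).add
    (hT.tendsto_sInf_range_iterate_limitMean hv)

theorem tendsto_iterate_apply_limitMean (hT : IsMeanType I p T) (hI : I.OrdConnected)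
    (hcont : ContinuousOn T {v : Fin p → ℝ | ∀ i, v i ∈ I}) (hwc : IsWeaklyContractive I p T)
    {v : Fin p → ℝ} (hv : ∀ i, v i ∈ I) (i : Fin p) :
    Tendsto (fun n => T^[n] v i) atTop (𝓝 (limitMean T v)) :=
  tendsto_of_tendsto_of_tendsto_of_le_of_le (hT.tendsto_sInf_range_iterate_limitMean hv)
    (hT.tendsto_sSup_range_iterate_limitMean hI hcont hwc hv)
    (fun n => (mem_Icc_sInf_sSup_range (T^[n] v)).1 i)
    (fun n => (mem_Icc_sInf_sSup_range (T^[n] v)).2 i)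

theorem isMean_limitMean (hT : IsMeanType I p T) : IsMean I p (limitMean T) := fun _ hv =>
  ⟨(hT.monotone_sInf_range_iterate hv).ge_of_tendsto
      (hT.tendsto_sInf_range_iterate_limitMean hv) 0,
    ciSup_le (hT.sInf_range_iterate_le_sSup_range hv)⟩

theorem limitMean_apply (hT : IsMeanType I p T) {v : Fin p → ℝ} (hv : ∀ i, v i ∈ I) :
    limitMean T (T v) = limitMean T v := by
  refine tendsto_nhds_unique (hT.tendsto_sInf_range_iterate_limitMean (hT.mapsTo hv)) ?_
  simpa only [comp_def, iterate_succ_apply] using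
    (hT.tendsto_sInf_range_iterate_limitMean hv).comp (tendsto_add_atTop_nat 1)

theorem eq_limitMean_of_isMean (hT : IsMeanType I p T) (hI : I.OrdConnected)
    (hcont : ContinuousOn T {v : Fin p → ℝ | ∀ i, v i ∈ I}) (hwc : IsWeaklyContractive I p T)
    {K : (Fin p → ℝ) → ℝ} (hK : IsMean I p K)
    (hKT : ∀ v : Fin p → ℝ, (∀ i, v i ∈ I) → K (T v) = K v)
    {v : Fin p → ℝ} (hv : ∀ i, v i ∈ I) : K v = limitMean T v := by
  have horbit : ∀ n, K (T^[n] v) = K v := fun n => by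
    induction n with
    | zero => rfl
    | succ n ih => rw [iterate_succ_apply', hKT _ (hT.mapsTo.iterate n hv), ih]
  have hK_mem : ∀ n, K v ∈ Icc (sInf (range (T^[n] v))) (sSup (range (T^[n] v))) := fun n =>
    horbit n ▸ hK _ (hT.mapsTo.iterate n hv)
  exact le_antisymm
    (ge_of_tendsto' (hT.tendsto_sSup_range_iterate_limitMean hI hcont hwc hv) fun n => (hK_mem n).2)
    (le_of_tendsto' (hT.tendsto_sInf_range_iterate_limitMean hv) fun n => (hK_mem n).1)

end IsMeanType

theorem exists_unique_invariant_mean_of_continuous_weakly_contractive_general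
    {I : Set ℝ} (hI : I.OrdConnected)
    {p : ℕ} (hp : 2 ≤ p)
    (T : (Fin p → ℝ) → Fin p → ℝ) (hT : IsMeanType I p T)
    (hcont : ContinuousOn T {v : Fin p → ℝ | ∀ i, v i ∈ I})
    (hwc : ∀ v : Fin p → ℝ, (∀ i, v i ∈ I) → (∃ i j, v i ≠ v j) →
      ∃ n₀ : ℕ, ∀ n ≥ n₀,
        sSup (Set.range (T^[n] v)) - sInf (Set.range (T^[n] v)) <
          sSup (Set.range v) - sInf (Set.range v)) :
    ∃ K : (Fin p → ℝ) → ℝ,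
      (IsMean I p K ∧ ∀ v : Fin p → ℝ, (∀ i, v i ∈ I) → K (T v) = K v) ∧
      (∀ K' : (Fin p → ℝ) → ℝ, IsMean I p K' →
        (∀ v : Fin p → ℝ, (∀ i, v i ∈ I) → K' (T v) = K' v) →
        ∀ v : Fin p → ℝ, (∀ i, v i ∈ I) → K' v = K v) ∧
      ∀ v : Fin p → ℝ, (∀ i, v i ∈ I) →
        ∀ i, Filter.Tendsto (fun n => T^[n] v i) Filter.atTop (nhds (K v)) := by
  have : NeZero p := ⟨by omega⟩
  exact ⟨limitMean T, ⟨hT.isMean_limitMean, fun v hv => hT.limitMean_apply hv⟩,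
    fun K' hK' hK'T v hv => hT.eq_limitMean_of_isMean hI hcont hwc hK' hK'T hv,
    fun v hv i => hT.tendsto_iterate_apply_limitMean hI hcont hwc hv i⟩

/-- A continuous, weakly contractive mean-type mapping has a
unique invariant mean `K`, and the iterates converge pointwise to `(K,…,K)`. -/
theorem exists_unique_invariant_mean_of_continuous_weakly_contractive
    {I : Set ℝ} (hne : I.Nonempty) (hI : I.OrdConnected)
    {p : ℕ} (hp : 2 ≤ p)
    (T : (Fin p → ℝ) → Fin p → ℝ) (hT : IsMeanType I p T)
    (hcont : ContinuousOn T {v : Fin p → ℝ | ∀ i, v i ∈ I})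
    (hwc : ∀ v : Fin p → ℝ, (∀ i, v i ∈ I) → (∃ i j, v i ≠ v j) →
      ∃ n₀ : ℕ, ∀ n ≥ n₀,
        sSup (Set.range (T^[n] v)) - sInf (Set.range (T^[n] v)) <
          sSup (Set.range v) - sInf (Set.range v)) :
    ∃ K : (Fin p → ℝ) → ℝ,
      (IsMean I p K ∧ ∀ v : Fin p → ℝ, (∀ i, v i ∈ I) → K (T v) = K v) ∧
      (∀ K' : (Fin p → ℝ) → ℝ, IsMean I p K' →
        (∀ v : Fin p → ℝ, (∀ i, v i ∈ I) → K' (T v) = K' v) →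
        ∀ v : Fin p → ℝ, (∀ i, v i ∈ I) → K' v = K v) ∧
      ∀ v : Fin p → ℝ, (∀ i, v i ∈ I) →
        ∀ i, Filter.Tendsto (fun n => T^[n] v i) Filter.atTop (nhds (K v)) :=
  exists_unique_invariant_mean_of_continuous_weakly_contractive_general hI hp T hT hcont hwc
end

section
/- Assume 𝐌 : I^p → I^p is a mean-type mapping and K : I^p → I is its unique 𝐌-invariant mean. A function F : I^p → ℝ which is continuous at every point of the diagonal Δ(I^p) := {(u₁,…,u_p) ∈ I^p : u₁ = … = u_p} satisfies the functional equation F ∘ 𝐌 = F if and only if there is a continuous function φ : I → ℝ such that F = φ ∘ K. -/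
open Filter Set Topology

/-! Along the orbit `𝐌ⁿ(v)` the largest coordinate decreases and the smallest one increases,
because every coordinate of `𝐌` is a mean. Their limits are therefore both `𝐌`-invariant means,
so by uniqueness both equal `K v`, and the orbit converges to the diagonal point `(K v, …, K v)`.
An `𝐌`-invariant `F` is constant along the orbit, so continuity at the diagonal gives
`F v = F (K v, …, K v)`, i.e. `F = φ ∘ K` with `φ t = F (t, …, t)`. -/

theorem apply_eq_of_tendsto_iterate {α β : Type*} [TopologicalSpace α] [TopologicalSpace β]
    [T2Space β] {S : Set α} {T : α → α} {F : α → β} {v x : α} (hTS : MapsTo T S S)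
    (hFT : ∀ w ∈ S, F (T w) = F w) (hv : v ∈ S) (hF : ContinuousWithinAt F S x)
    (hlim : Tendsto (fun n => T^[n] v) atTop (𝓝 x)) : F v = F x := by
  have hconst : ∀ n, F (T^[n] v) = F v := by
    intro n
    induction n with
    | zero => rfl
    | succ n ih => rw [Function.iterate_succ_apply', hFT _ (hTS.iterate n hv), ih]
  refine tendsto_nhds_unique ?_ (hF.tendsto.comp
    (tendsto_nhdsWithin_iff.2 ⟨hlim, .of_forall fun n => hTS.iterate n hv⟩))
  simpa only [Function.comp_def, hconst] using tendsto_const_nhds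

theorem IsMeanType.mapsTo_s15 {I : Set ℝ} {p : ℕ} {T : (Fin p → ℝ) → Fin p → ℝ}
    (hT : IsMeanType I p T) : MapsTo T {v | ∀ i, v i ∈ I} {v | ∀ i, v i ∈ I} :=
  fun v hv => hT.2 v hv

section Means

variable {I : Set ℝ} {p : ℕ} [Nonempty (Fin p)] {T : (Fin p → ℝ) → Fin p → ℝ}
  {v : Fin p → ℝ}

theorem IsMean.apply_mem {M : (Fin p → ℝ) → ℝ} (hM : IsMean I p M) (hI : I.OrdConnected)
    (hv : ∀ i, v i ∈ I) : M v ∈ I := by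
  obtain ⟨i, hi⟩ := (range_nonempty v).csInf_mem (finite_range v)
  obtain ⟨j, hj⟩ := (range_nonempty v).csSup_mem (finite_range v)
  exact hI.out (hi ▸ hv i) (hj ▸ hv j) (hM v hv)

theorem IsMeanType.sSup_range_apply_le (hT : IsMeanType I p T) (hv : ∀ i, v i ∈ I) :
    sSup (range (T v)) ≤ sSup (range v) :=
  csSup_le (range_nonempty _) (forall_mem_range.2 fun i => (hT.1 i v hv).2)

theorem IsMeanType.sInf_range_le_apply (hT : IsMeanType I p T) (hv : ∀ i, v i ∈ I) :
    sInf (range v) ≤ sInf (range (T v)) :=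
  le_csInf (range_nonempty _) (forall_mem_range.2 fun i => (hT.1 i v hv).1)

variable (T v) in
noncomputable def orbitMax (n : ℕ) : ℝ := sSup (range (T^[n] v))

variable (T v) in
noncomputable def orbitMin (n : ℕ) : ℝ := sInf (range (T^[n] v))

variable (T v) in
theorem orbitMin_le_orbitMax (n : ℕ) : orbitMin T v n ≤ orbitMax T v n :=
  csInf_le_csSup (range_nonempty _) (finite_range _).bddBelow (finite_range _).bddAbove

theorem IsMeanType.antitone_orbitMax (hT : IsMeanType I p T) (hv : ∀ i, v i ∈ I) :
    Antitone (orbitMax T v) :=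
  antitone_nat_of_succ_le fun n => by
    rw [orbitMax, orbitMax, Function.iterate_succ_apply']
    exact hT.sSup_range_apply_le (hT.mapsTo_s15.iterate n hv)

theorem IsMeanType.monotone_orbitMin (hT : IsMeanType I p T) (hv : ∀ i, v i ∈ I) :
    Monotone (orbitMin T v) :=
  monotone_nat_of_le_succ fun n => by
    rw [orbitMin, orbitMin, Function.iterate_succ_apply']
    exact hT.sInf_range_le_apply (hT.mapsTo_s15.iterate n hv)

theorem IsMeanType.sInf_range_le_orbitMax (hT : IsMeanType I p T) (hv : ∀ i, v i ∈ I)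
    (n : ℕ) : sInf (range v) ≤ orbitMax T v n :=
  (hT.monotone_orbitMin hv n.zero_le).trans (orbitMin_le_orbitMax T v n)

theorem IsMeanType.orbitMin_le_sSup_range (hT : IsMeanType I p T) (hv : ∀ i, v i ∈ I)
    (n : ℕ) : orbitMin T v n ≤ sSup (range v) :=
  (orbitMin_le_orbitMax T v n).trans (hT.antitone_orbitMax hv n.zero_le)

variable (T) in
noncomputable def limMax (v : Fin p → ℝ) : ℝ := ⨅ n, orbitMax T v n

variable (T) in
noncomputable def limMin (v : Fin p → ℝ) : ℝ := ⨆ n, orbitMin T v n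

theorem IsMeanType.tendsto_orbitMax (hT : IsMeanType I p T) (hv : ∀ i, v i ∈ I) :
    Tendsto (orbitMax T v) atTop (𝓝 (limMax T v)) :=
  tendsto_atTop_ciInf (hT.antitone_orbitMax hv)
    ⟨_, forall_mem_range.2 (hT.sInf_range_le_orbitMax hv)⟩

theorem IsMeanType.tendsto_orbitMin (hT : IsMeanType I p T) (hv : ∀ i, v i ∈ I) :
    Tendsto (orbitMin T v) atTop (𝓝 (limMin T v)) :=
  tendsto_atTop_ciSup (hT.monotone_orbitMin hv)
    ⟨_, forall_mem_range.2 (hT.orbitMin_le_sSup_range hv)⟩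

theorem IsMeanType.isMean_limMax (hT : IsMeanType I p T) : IsMean I p (limMax T) :=
  fun _ hv => ⟨le_ciInf (hT.sInf_range_le_orbitMax hv),
    ciInf_le ⟨_, forall_mem_range.2 (hT.sInf_range_le_orbitMax hv)⟩ 0⟩

theorem IsMeanType.isMean_limMin (hT : IsMeanType I p T) : IsMean I p (limMin T) :=
  fun _ hv => ⟨le_ciSup ⟨_, forall_mem_range.2 (hT.orbitMin_le_sSup_range hv)⟩ 0,
    ciSup_le (hT.orbitMin_le_sSup_range hv)⟩

theorem IsMeanType.limMax_apply (hT : IsMeanType I p T) (hv : ∀ i, v i ∈ I) :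
    limMax T (T v) = limMax T v :=
  tendsto_nhds_unique (hT.tendsto_orbitMax (hT.mapsTo_s15 hv))
    ((tendsto_add_atTop_iff_nat 1).2 (hT.tendsto_orbitMax hv))

theorem IsMeanType.limMin_apply (hT : IsMeanType I p T) (hv : ∀ i, v i ∈ I) :
    limMin T (T v) = limMin T v :=
  tendsto_nhds_unique (hT.tendsto_orbitMin (hT.mapsTo_s15 hv))
    ((tendsto_add_atTop_iff_nat 1).2 (hT.tendsto_orbitMin hv))

theorem IsMeanType.tendsto_iterate_of_limMin_eq_limMax (hT : IsMeanType I p T)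
    (hv : ∀ i, v i ∈ I) (h : limMin T v = limMax T v) :
    Tendsto (fun n => T^[n] v) atTop (𝓝 fun _ => limMax T v) :=
  tendsto_pi_nhds.2 fun i => tendsto_of_tendsto_of_tendsto_of_le_of_le
    (h ▸ hT.tendsto_orbitMin hv) (hT.tendsto_orbitMax hv)
    (fun _ => csInf_le (finite_range _).bddBelow ⟨i, rfl⟩)
    (fun _ => le_csSup (finite_range _).bddAbove ⟨i, rfl⟩)

theorem IsMeanType.tendsto_iterate_of_unique_invariant_mean (hT : IsMeanType I p T)
    {K : (Fin p → ℝ) → ℝ}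
    (hKuniq : ∀ K' : (Fin p → ℝ) → ℝ, IsMean I p K' →
      (∀ v : Fin p → ℝ, (∀ i, v i ∈ I) → K' (T v) = K' v) →
      ∀ v : Fin p → ℝ, (∀ i, v i ∈ I) → K' v = K v)
    (hv : ∀ i, v i ∈ I) : Tendsto (fun n => T^[n] v) atTop (𝓝 fun _ => K v) := by
  have hmax := hKuniq _ hT.isMean_limMax (fun _ => hT.limMax_apply) v hv
  have hmin := hKuniq _ hT.isMean_limMin (fun _ => hT.limMin_apply) v hv
  simpa only [hmax] using hT.tendsto_iterate_of_limMin_eq_limMax hv (hmin.trans hmax.symm)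

end Means

theorem invariant_functions_of_unique_invariant_mean_general
    {I : Set ℝ} (hI : I.OrdConnected)
    {p : ℕ} (hp : 2 ≤ p)
    (T : (Fin p → ℝ) → Fin p → ℝ) (hT : IsMeanType I p T)
    (K : (Fin p → ℝ) → ℝ) (hK : IsMean I p K)
    (hKinv : ∀ v : Fin p → ℝ, (∀ i, v i ∈ I) → K (T v) = K v)
    (hKuniq : ∀ K' : (Fin p → ℝ) → ℝ, IsMean I p K' →
      (∀ v : Fin p → ℝ, (∀ i, v i ∈ I) → K' (T v) = K' v) →
      ∀ v : Fin p → ℝ, (∀ i, v i ∈ I) → K' v = K v)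
    (F : (Fin p → ℝ) → ℝ)
    (hF : ∀ t ∈ I, ContinuousWithinAt F {v : Fin p → ℝ | ∀ i, v i ∈ I}
      (fun _ => t)) :
    (∀ v : Fin p → ℝ, (∀ i, v i ∈ I) → F (T v) = F v) ↔
    ∃ φ : ℝ → ℝ, ContinuousOn φ I ∧
      ∀ v : Fin p → ℝ, (∀ i, v i ∈ I) → F v = φ (K v) := by
  have : Nonempty (Fin p) := ⟨⟨0, by omega⟩⟩
  constructor
  · intro hFT
    refine ⟨fun t => F fun _ => t, fun t ht => ?_, fun v hv => ?_⟩
    · exact (hF t ht).comp (continuous_pi fun _ => continuous_id).continuousWithinAt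
        (show MapsTo _ I {v : Fin p → ℝ | ∀ i, v i ∈ I} from fun _ hs _ => hs)
    · exact apply_eq_of_tendsto_iterate hT.mapsTo_s15 hFT hv (hF _ (hK.apply_mem hI hv))
        (hT.tendsto_iterate_of_unique_invariant_mean hKuniq hv)
  · rintro ⟨φ, -, hφ⟩ v hv
    rw [hφ _ (hT.mapsTo_s15 hv), hφ v hv, hKinv v hv]

/-- If `K` is the unique `𝐌`-invariant mean, then a function
`F : I^p → ℝ` continuous at every diagonal point satisfies `F ∘ 𝐌 = F` iff
`F = φ ∘ K` for some continuous `φ : I → ℝ`. -/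
theorem invariant_functions_of_unique_invariant_mean
    {I : Set ℝ} (hne : I.Nonempty) (hI : I.OrdConnected)
    {p : ℕ} (hp : 2 ≤ p)
    (T : (Fin p → ℝ) → Fin p → ℝ) (hT : IsMeanType I p T)
    (K : (Fin p → ℝ) → ℝ) (hK : IsMean I p K)
    (hKinv : ∀ v : Fin p → ℝ, (∀ i, v i ∈ I) → K (T v) = K v)
    (hKuniq : ∀ K' : (Fin p → ℝ) → ℝ, IsMean I p K' →
      (∀ v : Fin p → ℝ, (∀ i, v i ∈ I) → K' (T v) = K' v) →
      ∀ v : Fin p → ℝ, (∀ i, v i ∈ I) → K' v = K v)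
    (F : (Fin p → ℝ) → ℝ)
    (hF : ∀ t ∈ I, ContinuousWithinAt F {v : Fin p → ℝ | ∀ i, v i ∈ I}
      (fun _ => t)) :
    (∀ v : Fin p → ℝ, (∀ i, v i ∈ I) → F (T v) = F v) ↔
    ∃ φ : ℝ → ℝ, ContinuousOn φ I ∧
      ∀ v : Fin p → ℝ, (∀ i, v i ∈ I) → F v = φ (K v) :=
  invariant_functions_of_unique_invariant_mean_general hI hp T hT K hK hKinv hKuniq F hF
end
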